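/- Let X, Y, Z be real Hilbert spaces, D ⊆ X a nonempty, bounded, closed, convex subset, L : dom L ⊆ X → Z a closed linear operator with D ∩ dom L ≠ ∅, F : D → Y weakly sequentially closed, and v ∈ Y such that F(μ) = v has a solution in D ∩ dom L. Suppose the ‖L(·)‖-minimizing solution of F(μ) = v is unique and denote it by μ⁺. Let (δₘ) be positive numbers with δₘ → 0, (vₘ) a sequence in Y with ‖v − vₘ‖ ≤ δₘ, and (λₘ) positive numbers with λₘ → 0 and δₘ²/λₘ → 0, and for each m let μₘ be a minimizer of T_{vₘ,λₘ}. Then the whole sequence (μₘ) converges weakly to μ⁺ in X. -/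

import Mathlib

open Filter
open scoped RealInnerProductSpace ENNReal

attribute [local instance] Classical.propDecidable

/-- A sequence `x` in a real inner-product space converges weakly to `l`. -/
def WeakTendsto {X : Type*} [NormedAddCommGroup X] [InnerProductSpace ℝ X]
    (x : ℕ → X) (l : X) : Prop :=
  ∀ w : X, Tendsto (fun n => ⟪w, x n⟫) atTop (nhds ⟪w, l⟫)

/-- `F : D → Y` is weakly sequentially closed: whenever `μₙ ∈ D`, `μₙ ⇀ μ` weakly in `X`
and `F(μₙ) ⇀ y` weakly in `Y`, one has `μ ∈ D` and `F(μ) = y`. -/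
def WeaklySeqClosedOn {X Y : Type*}
    [NormedAddCommGroup X] [InnerProductSpace ℝ X]
    [NormedAddCommGroup Y] [InnerProductSpace ℝ Y]
    (F : X → Y) (D : Set X) : Prop :=
  ∀ (μs : ℕ → X) (μ : X) (y : Y), (∀ n, μs n ∈ D) →
    WeakTendsto μs μ → WeakTendsto (fun n => F (μs n)) y → μ ∈ D ∧ F μ = y

/-- The Tikhonov functional `T_{v,λ} : X → ℝ ∪ {∞}`,
`T_{v,λ}(μ) = (1/2)‖F(μ) − v‖² + (λ/2)‖Lμ‖²` for `μ ∈ D ∩ dom L`, and `∞` otherwise. -/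
noncomputable def tikhonovFunctional {X Y Z : Type*}
    [NormedAddCommGroup X] [InnerProductSpace ℝ X]
    [NormedAddCommGroup Y] [InnerProductSpace ℝ Y]
    [NormedAddCommGroup Z] [InnerProductSpace ℝ Z]
    (D : Set X) (domL : Submodule ℝ X) (L : domL →ₗ[ℝ] Z)
    (F : X → Y) (v : Y) (lam : ℝ) (μ : X) : ℝ≥0∞ :=
  if h : μ ∈ D ∧ μ ∈ domL then
    ENNReal.ofReal ((1 / 2) * ‖F μ - v‖ ^ 2 + (lam / 2) * ‖L ⟨μ, h.2⟩‖ ^ 2)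
  else ⊤

/-- Bounded sequences in a real Hilbert space have weakly convergent subsequences. -/
lemma exists_weak_subseq {X : Type*} [NormedAddCommGroup X] [InnerProductSpace ℝ X]
    [CompleteSpace X] (x : ℕ → X) (C : ℝ) (hC : ∀ n, ‖x n‖ ≤ C) :
    ∃ (l : X) (φ : ℕ → ℕ), StrictMono φ ∧ WeakTendsto (fun n => x (φ n)) l := by
  have hC0 : 0 ≤ C := le_trans (norm_nonneg _) (hC 0)
  -- extract a subsequence along which all ⟪x k, x ·⟫ converge
  set g : ℕ → ℕ → ℝ := fun n k => ⟪x k, x n⟫ with hg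
  have hScompact : IsCompact (Set.pi Set.univ fun _ : ℕ => Set.Icc (-(C*C)) (C*C)) :=
    isCompact_univ_pi fun _ => isCompact_Icc
  have hmemS : ∀ n, g n ∈ Set.pi Set.univ fun _ : ℕ => Set.Icc (-(C*C)) (C*C) := by
    intro n k _
    have h1 : |⟪x k, x n⟫| ≤ C * C :=
      le_trans (abs_real_inner_le_norm _ _)
        (mul_le_mul (hC k) (hC n) (norm_nonneg _) hC0)
    exact abs_le.mp h1
  obtain ⟨a, -, φ, hφ, hconv⟩ := hScompact.isSeqCompact hmemS
  have hconv' : ∀ k, Tendsto (fun n => ⟪x k, x (φ n)⟫) atTop (nhds (a k)) := by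
    intro k
    exact (tendsto_pi_nhds.mp hconv) k
  -- the set where the subsequence converges weakly against a vector
  set A : Set X := {w | ∃ r, Tendsto (fun n => ⟪w, x (φ n)⟫) atTop (nhds r)} with hA
  have hxA : ∀ k, x k ∈ A := fun k => ⟨a k, hconv' k⟩
  have hAclosed : ∀ w ∈ closure A, w ∈ A := by
    intro w hw
    have hcauchy : CauchySeq (fun n => ⟪w, x (φ n)⟫) := by
      rw [Metric.cauchySeq_iff]
      intro ε hε
      have hεC : 0 < ε / (3 * (C + 1)) := by positivity
      obtain ⟨w', hw'A, hww'⟩ := Metric.mem_closure_iff.mp hw _ hεC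
      obtain ⟨r, hr⟩ := hw'A
      have hcs : CauchySeq (fun n => ⟪w', x (φ n)⟫) := hr.cauchySeq
      rw [Metric.cauchySeq_iff] at hcs
      obtain ⟨N, hN⟩ := hcs (ε/3) (by positivity)
      refine ⟨N, fun m hm n hn => ?_⟩
      have key : ∀ j, |⟪w, x (φ j)⟫ - ⟪w', x (φ j)⟫| ≤ ε / 3 := by
        intro j
        have h1 : ⟪w, x (φ j)⟫ - ⟪w', x (φ j)⟫ = ⟪w - w', x (φ j)⟫ := by
          rw [inner_sub_left]
        rw [h1]
        have h2 : |⟪w - w', x (φ j)⟫| ≤ ‖w - w'‖ * C :=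
          le_trans (abs_real_inner_le_norm _ _)
            (mul_le_mul_of_nonneg_left (hC _) (norm_nonneg _))
        have h3 : ‖w - w'‖ * C ≤ ε / 3 := by
          have h4 : ‖w - w'‖ < ε / (3 * (C + 1)) := by
            rwa [dist_eq_norm] at hww'
          have h5 : ‖w - w'‖ * C ≤ (ε / (3 * (C + 1))) * (C + 1) :=
            mul_le_mul h4.le (by linarith) hC0 hεC.le
          calc ‖w - w'‖ * C ≤ (ε / (3 * (C + 1))) * (C + 1) := h5
            _ = ε / 3 := by field_simp
        linarith
      have h6 := hN m hm n hn
      rw [Real.dist_eq] at h6 ⊢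
      have km := key m
      have kn := key n
      have : ⟪w, x (φ m)⟫ - ⟪w, x (φ n)⟫ =
          (⟪w, x (φ m)⟫ - ⟪w', x (φ m)⟫) + (⟪w', x (φ m)⟫ - ⟪w', x (φ n)⟫)
            + (⟪w', x (φ n)⟫ - ⟪w, x (φ n)⟫) := by ring
      rw [this]
      calc |(⟪w, x (φ m)⟫ - ⟪w', x (φ m)⟫) + (⟪w', x (φ m)⟫ - ⟪w', x (φ n)⟫)
            + (⟪w', x (φ n)⟫ - ⟪w, x (φ n)⟫)|
          ≤ |⟪w, x (φ m)⟫ - ⟪w', x (φ m)⟫| + |⟪w', x (φ m)⟫ - ⟪w', x (φ n)⟫|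
            + |⟪w', x (φ n)⟫ - ⟪w, x (φ n)⟫| := by
              exact (abs_add_le _ _).trans (by gcongr; exact abs_add_le _ _)
        _ < ε := by
            have h7 : |⟪w', x (φ n)⟫ - ⟪w, x (φ n)⟫| = |⟪w, x (φ n)⟫ - ⟪w', x (φ n)⟫| :=
              abs_sub_comm _ _
            rw [h7]
            linarith
    obtain ⟨r, hr⟩ := cauchySeq_tendsto_of_complete hcauchy
    exact ⟨r, hr⟩
  have hspanA : ∀ w ∈ Submodule.span ℝ (Set.range x), w ∈ A := by
    intro w hw
    induction hw using Submodule.span_induction with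
    | mem y hy => obtain ⟨k, rfl⟩ := hy; exact hxA k
    | zero => exact ⟨0, by simpa using tendsto_const_nhds⟩
    | add y z _ _ hy hz =>
        obtain ⟨ry, hry⟩ := hy
        obtain ⟨rz, hrz⟩ := hz
        exact ⟨ry + rz, by simpa only [inner_add_left] using hry.add hrz⟩
    | smul t y _ hy =>
        obtain ⟨ry, hry⟩ := hy
        refine ⟨t * ry, ?_⟩
        simpa only [real_inner_smul_left] using hry.const_mul t
  -- all of X converges, via orthogonal projection onto the closed span
  set V : Submodule ℝ X := (Submodule.span ℝ (Set.range x)).topologicalClosure with hV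
  have hconvAll : ∀ w : X, ∃ r, Tendsto (fun n => ⟪w, x (φ n)⟫) atTop (nhds r) := by
    intro w
    set P : X := (Submodule.orthogonalProjectionOnto V w : X) with hP
    have hPV : P ∈ V := (Submodule.orthogonalProjectionOnto V w).2
    have hPA : P ∈ A := by
      apply hAclosed
      have : (V : Set X) = closure (Submodule.span ℝ (Set.range x) : Set X) :=
        (Submodule.topologicalClosure_coe _)
      have hsub : closure ((Submodule.span ℝ (Set.range x) : Set X)) ⊆ closure A :=
        closure_mono (fun y hy => hspanA y hy)
      exact hsub (this ▸ hPV)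
    have heq : ∀ n, ⟪w, x (φ n)⟫ = ⟪P, x (φ n)⟫ := by
      intro n
      have h1 : x (φ n) ∈ V :=
        (Submodule.le_topologicalClosure _) (Submodule.subset_span ⟨φ n, rfl⟩)
      have h2 : ⟪x (φ n), w - P⟫ = 0 :=
        (Submodule.sub_starProjection_mem_orthogonal (K := V) w) _ h1
      have h3 : ⟪w - P, x (φ n)⟫ = 0 := by rwa [real_inner_comm]
      rw [inner_sub_left] at h3
      linarith
    obtain ⟨r, hr⟩ := hPA
    exact ⟨r, hr.congr fun n => (heq n).symm⟩
  choose r hr using hconvAll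
  have hradd : ∀ w w', r (w + w') = r w + r w' := by
    intro w w'
    refine tendsto_nhds_unique (hr (w + w')) ?_
    simpa only [inner_add_left] using (hr w).add (hr w')
  have hrsmul : ∀ (t : ℝ) w, r (t • w) = t * r w := by
    intro t w
    refine tendsto_nhds_unique (hr (t • w)) ?_
    simpa only [real_inner_smul_left] using (hr w).const_mul t
  have hrbound : ∀ w, ‖r w‖ ≤ C * ‖w‖ := by
    intro w
    have h1 : Tendsto (fun n => |⟪w, x (φ n)⟫|) atTop (nhds |r w|) := (hr w).abs
    rw [Real.norm_eq_abs]
    refine le_of_tendsto h1 (Eventually.of_forall fun n => ?_)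
    calc |⟪w, x (φ n)⟫| ≤ ‖w‖ * ‖x (φ n)‖ := abs_real_inner_le_norm _ _
      _ ≤ ‖w‖ * C := mul_le_mul_of_nonneg_left (hC _) (norm_nonneg _)
      _ = C * ‖w‖ := mul_comm _ _
  set f : X →L[ℝ] ℝ := LinearMap.mkContinuous
    { toFun := r
      map_add' := hradd
      map_smul' := by intro t w; simpa using hrsmul t w } C hrbound with hf
  set l : X := (InnerProductSpace.toDual ℝ X).symm f with hl
  refine ⟨l, φ, hφ, fun w => ?_⟩
  have : ⟪w, l⟫ = r w := by
    rw [real_inner_comm]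
    exact InnerProductSpace.toDual_symm_apply
  rw [this]
  exact hr w

/-- A closed submodule of a product of Hilbert spaces is weakly sequentially closed. -/
lemma mem_of_weakTendsto_of_isClosed {X Z : Type*}
    [NormedAddCommGroup X] [InnerProductSpace ℝ X] [CompleteSpace X]
    [NormedAddCommGroup Z] [InnerProductSpace ℝ Z] [CompleteSpace Z]
    (G : Submodule ℝ (X × Z)) (hG : IsClosed (G : Set (X × Z)))
    (a : ℕ → X) (b : ℕ → Z) (hab : ∀ n, (a n, b n) ∈ G)
    (la : X) (lb : Z) (hwa : WeakTendsto a la) (hwb : WeakTendsto b lb) :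
    (la, lb) ∈ G := by
  by_contra hnot
  obtain ⟨f, u, hfu, hux⟩ := geometric_hahn_banach_closed_point G.convex hG hnot
  have hf0 : ∀ q ∈ G, f q = 0 := by
    intro q hq
    by_contra h
    have h1 : f (((u + 1) / f q) • q) < u := hfu _ (G.smul_mem _ hq)
    rw [map_smul, smul_eq_mul] at h1
    rw [div_mul_cancel₀ _ h] at h1
    linarith
  have hu0 : 0 < u := by
    have := hfu 0 G.zero_mem
    simpa using this
  -- decompose f
  set g : X →L[ℝ] ℝ := f.comp (ContinuousLinearMap.inl ℝ X Z) with hg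
  set h : Z →L[ℝ] ℝ := f.comp (ContinuousLinearMap.inr ℝ X Z) with hh
  have hdecomp : ∀ p : X × Z, f p = g p.1 + h p.2 := by
    intro p
    have h1 : p = (p.1, (0:Z)) + ((0:X), p.2) := by simp
    calc f p = f ((p.1, (0:Z)) + ((0:X), p.2)) := by rw [← h1]
      _ = f (p.1, (0:Z)) + f ((0:X), p.2) := map_add _ _ _
      _ = g p.1 + h p.2 := rfl
  set wg : X := (InnerProductSpace.toDual ℝ X).symm g with hwg
  set wh : Z := (InnerProductSpace.toDual ℝ Z).symm h with hwh
  have hga : ∀ y : X, g y = ⟪wg, y⟫ := fun y => InnerProductSpace.toDual_symm_apply.symm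
  have hhb : ∀ y : Z, h y = ⟪wh, y⟫ := fun y => InnerProductSpace.toDual_symm_apply.symm
  have htend : Tendsto (fun n => f (a n, b n)) atTop (nhds (f (la, lb))) := by
    have h1 : Tendsto (fun n => ⟪wg, a n⟫ + ⟪wh, b n⟫) atTop
        (nhds (⟪wg, la⟫ + ⟪wh, lb⟫)) := (hwa wg).add (hwb wh)
    have h2 : ∀ n, f (a n, b n) = ⟪wg, a n⟫ + ⟪wh, b n⟫ := by
      intro n; rw [hdecomp, hga, hhb]
    have h3 : f (la, lb) = ⟪wg, la⟫ + ⟪wh, lb⟫ := by rw [hdecomp, hga, hhb]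
    rw [h3]
    exact h1.congr fun n => (h2 n).symm
  have hzero : Tendsto (fun n => f (a n, b n)) atTop (nhds 0) := by
    have : ∀ n, f (a n, b n) = 0 := fun n => hf0 _ (hab n)
    simpa [this] using tendsto_const_nhds (α := ℝ) (f := atTop (α := ℕ)) (a := (0:ℝ))
  have := tendsto_nhds_unique htend hzero
  rw [this] at hux
  linarith

/-- **Convergence of Tikhonov regularization (unique minimum-norm solution).**
Under the assumptions of the convergence theorem for Tikhonov regularization, if the
`‖L(·)‖`-minimizing solution `μ⁺` of `F(μ) = v` is unique, then the whole sequence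
`(μₘ)` of Tikhonov minimizers converges weakly to `μ⁺` in `X`. -/
theorem tikhonov_convergence_unique
    {X Y Z : Type*}
    [NormedAddCommGroup X] [InnerProductSpace ℝ X] [CompleteSpace X]
    [NormedAddCommGroup Y] [InnerProductSpace ℝ Y] [CompleteSpace Y]
    [NormedAddCommGroup Z] [InnerProductSpace ℝ Z] [CompleteSpace Z]
    (D : Set X) (hDne : D.Nonempty) (hDbdd : Bornology.IsBounded D)
    (hDclosed : IsClosed D) (hDconvex : Convex ℝ D)
    (domL : Submodule ℝ X) (L : domL →ₗ[ℝ] Z)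
    (hLgraph : IsClosed {p : X × Z | ∃ h : p.1 ∈ domL, L ⟨p.1, h⟩ = p.2})
    (hmeet : ∃ μ, μ ∈ D ∧ μ ∈ domL)
    (F : X → Y) (hF : WeaklySeqClosedOn F D)
    (v : Y) (hsol : ∃ μ, ∃ _ : μ ∈ D, ∃ _ : μ ∈ domL, F μ = v)
    (μplus : X) (hplusD : μplus ∈ D) (hplusL : μplus ∈ domL) (hplusSol : F μplus = v)
    (hplusMin : ∀ μ, μ ∈ D → ∀ hμ : μ ∈ domL, F μ = v →
      ‖L ⟨μplus, hplusL⟩‖ ≤ ‖L ⟨μ, hμ⟩‖)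
    (hplusUnique : ∀ μ', μ' ∈ D → ∀ hμ' : μ' ∈ domL, F μ' = v →
      (∀ μ, μ ∈ D → ∀ hμ : μ ∈ domL, F μ = v → ‖L ⟨μ', hμ'⟩‖ ≤ ‖L ⟨μ, hμ⟩‖) →
      μ' = μplus)
    (δ : ℕ → ℝ) (hδpos : ∀ m, 0 < δ m) (hδ0 : Tendsto δ atTop (nhds 0))
    (vm : ℕ → Y) (hvm : ∀ m, ‖v - vm m‖ ≤ δ m)
    (lam : ℕ → ℝ) (hlampos : ∀ m, 0 < lam m) (hlam0 : Tendsto lam atTop (nhds 0))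
    (hrate : Tendsto (fun m => (δ m) ^ 2 / lam m) atTop (nhds 0))
    (μm : ℕ → X)
    (hμm : ∀ m, ∀ μ : X, tikhonovFunctional D domL L F (vm m) (lam m) (μm m)
      ≤ tikhonovFunctional D domL L F (vm m) (lam m) μ) :
    WeakTendsto μm μplus := by
  set c : ℝ := ‖(L ⟨μplus, hplusL⟩ : Z)‖ with hc
  have hc0 : 0 ≤ c := norm_nonneg _
  -- Step A : basic estimates from minimality of the Tikhonov functional
  have key : ∀ m, ∃ hmm : μm m ∈ D ∧ μm m ∈ domL,
      (1/2) * ‖F (μm m) - vm m‖^2 + (lam m/2) * ‖(L ⟨μm m, hmm.2⟩ : Z)‖^2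
        ≤ (1/2) * (δ m)^2 + (lam m/2) * c^2 := by
    intro m
    have hle := hμm m μplus
    unfold tikhonovFunctional at hle
    rw [dif_pos (⟨hplusD, hplusL⟩ : μplus ∈ D ∧ μplus ∈ domL)] at hle
    have hrhs : (1/2) * ‖F μplus - vm m‖^2 + (lam m/2) * ‖(L ⟨μplus, hplusL⟩ : Z)‖^2
        ≤ (1/2) * (δ m)^2 + (lam m/2) * c^2 := by
      have h1 : ‖F μplus - vm m‖ ≤ δ m := by rw [hplusSol]; exact hvm m
      have h2 : 0 ≤ ‖F μplus - vm m‖ := norm_nonneg _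
      nlinarith
    by_cases hmm : μm m ∈ D ∧ μm m ∈ domL
    · rw [dif_pos hmm] at hle
      refine ⟨hmm, ?_⟩
      have hnn : 0 ≤ (1/2) * ‖F μplus - vm m‖^2
          + (lam m/2) * ‖(L ⟨μplus, hplusL⟩ : Z)‖^2 :=
        add_nonneg (by positivity)
          (mul_nonneg (by linarith [(hlampos m).le]) (sq_nonneg _))
      exact ((ENNReal.ofReal_le_ofReal_iff hnn).mp hle).trans hrhs
    · rw [dif_neg hmm] at hle
      exact absurd (top_le_iff.mp hle) ENNReal.ofReal_ne_top
  choose hmem hineq using key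
  have hmemD : ∀ m, μm m ∈ D := fun m => (hmem m).1
  have hFm : ∀ m, ‖F (μm m) - vm m‖^2 ≤ (δ m)^2 + lam m * c^2 := by
    intro m
    have h := hineq m
    have h2 : 0 ≤ (lam m/2) * ‖(L ⟨μm m, (hmem m).2⟩ : Z)‖^2 :=
      mul_nonneg (by linarith [(hlampos m).le]) (sq_nonneg _)
    nlinarith
  have hLm : ∀ m, ‖(L ⟨μm m, (hmem m).2⟩ : Z)‖^2 ≤ (δ m)^2 / lam m + c^2 := by
    intro m
    have h := hineq m
    have hl := hlampos m
    have h2 : 0 ≤ ‖F (μm m) - vm m‖^2 := sq_nonneg _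
    have h3 : ‖(L ⟨μm m, (hmem m).2⟩ : Z)‖^2 ≤ ((δ m)^2 + lam m * c^2) / lam m := by
      rw [le_div_iff₀ hl]
      nlinarith
    calc ‖(L ⟨μm m, (hmem m).2⟩ : Z)‖^2 ≤ ((δ m)^2 + lam m * c^2) / lam m := h3
      _ = (δ m)^2 / lam m + c^2 := by field_simp
  -- Step B : strong convergence of the data fit
  have htsum : Tendsto (fun m => (δ m)^2 + lam m * c^2) atTop (nhds 0) := by
    have h1 : Tendsto (fun m => (δ m)^2) atTop (nhds 0) := by
      have := hδ0.mul hδ0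
      simpa [pow_two] using this
    have h2 : Tendsto (fun m => lam m * c^2) atTop (nhds 0) := by
      simpa using hlam0.mul_const (c^2)
    simpa using h1.add h2
  have hFv : Tendsto (fun m => F (μm m)) atTop (nhds v) := by
    rw [tendsto_iff_norm_sub_tendsto_zero]
    have hbound : ∀ m, ‖F (μm m) - v‖ ≤ Real.sqrt ((δ m)^2 + lam m * c^2) + δ m := by
      intro m
      have h1 : ‖F (μm m) - v‖ ≤ ‖F (μm m) - vm m‖ + ‖vm m - v‖ := by
        calc ‖F (μm m) - v‖ = ‖(F (μm m) - vm m) + (vm m - v)‖ := by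
              rw [sub_add_sub_cancel]
          _ ≤ _ := norm_add_le _ _
      have h2 : ‖vm m - v‖ ≤ δ m := by rw [norm_sub_rev]; exact hvm m
      have h3 : ‖F (μm m) - vm m‖ ≤ Real.sqrt ((δ m)^2 + lam m * c^2) := by
        have := Real.sqrt_le_sqrt (hFm m)
        rwa [Real.sqrt_sq (norm_nonneg _)] at this
      linarith
    have hlim : Tendsto (fun m => Real.sqrt ((δ m)^2 + lam m * c^2) + δ m) atTop (nhds 0) := by
      have h1 : Tendsto (fun m => Real.sqrt ((δ m)^2 + lam m * c^2)) atTop (nhds 0) := by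
        have := (Real.continuous_sqrt.tendsto 0).comp htsum
        simpa [Function.comp_def] using this
      simpa using h1.add hδ0
    exact squeeze_zero (fun m => norm_nonneg _) hbound hlim
  -- uniform bounds
  obtain ⟨CD, hCD⟩ := hDbdd.exists_norm_le
  obtain ⟨M, hM⟩ := hrate.bddAbove_range
  have hM' : ∀ m, (δ m)^2 / lam m ≤ M := fun m => hM (Set.mem_range_self m)
  have hCLb : ∀ m, ‖(L ⟨μm m, (hmem m).2⟩ : Z)‖ ≤ Real.sqrt (M + c^2) := by
    intro m
    have h1 : ‖(L ⟨μm m, (hmem m).2⟩ : Z)‖^2 ≤ M + c^2 :=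
      (hLm m).trans (by linarith [hM' m])
    have := Real.sqrt_le_sqrt h1
    rwa [Real.sqrt_sq (norm_nonneg _)] at this
  -- graph of L as a closed submodule
  set G : Submodule ℝ (X × Z) := LinearMap.range ((domL.subtype).prod L) with hG
  have hGset : (G : Set (X × Z)) = {p : X × Z | ∃ h : p.1 ∈ domL, L ⟨p.1, h⟩ = p.2} := by
    ext p
    constructor
    · rintro ⟨q, rfl⟩
      exact ⟨q.2, rfl⟩
    · rintro ⟨h, hL⟩
      refine ⟨⟨p.1, h⟩, ?_⟩
      have : ((domL.subtype).prod L) ⟨p.1, h⟩ = (p.1, L ⟨p.1, h⟩) := rfl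
      rw [this, hL]
  -- main subsequence extraction argument
  have main : ∀ ns : ℕ → ℕ, Tendsto ns atTop atTop →
      ∃ ms : ℕ → ℕ, WeakTendsto (fun n => μm (ns (ms n))) μplus := by
    intro ns hns
    obtain ⟨l, φ, hφ, hwl⟩ := exists_weak_subseq (fun n => μm (ns n)) CD
      (fun n => hCD _ (hmemD _))
    obtain ⟨ζ, ψ, hψ, hwζ⟩ := exists_weak_subseq
      (fun n => (L ⟨μm (ns (φ n)), (hmem _).2⟩ : Z)) (Real.sqrt (M + c^2))
      (fun n => hCLb _)
    set σ : ℕ → ℕ := fun n => ns (φ (ψ n)) with hσ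
    have hσtop : Tendsto σ atTop atTop :=
      hns.comp (hφ.tendsto_atTop.comp hψ.tendsto_atTop)
    have hwl' : WeakTendsto (fun n => μm (σ n)) l := fun w =>
      (hwl w).comp hψ.tendsto_atTop
    have hFw : WeakTendsto (fun n => F (μm (σ n))) v := fun w =>
      tendsto_const_nhds.inner (hFv.comp hσtop)
    obtain ⟨hlD, hlF⟩ := hF (fun n => μm (σ n)) l v (fun n => hmemD _) hwl' hFw
    have hpair : (l, ζ) ∈ G := by
      apply mem_of_weakTendsto_of_isClosed G (by rw [hGset]; exact hLgraph)
        (fun n => μm (σ n)) (fun n => (L ⟨μm (σ n), (hmem (σ n)).2⟩ : Z))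
        (fun n => ⟨⟨μm (σ n), (hmem (σ n)).2⟩, rfl⟩) l ζ hwl' hwζ
    rw [SetLike.mem_coe.symm, hGset] at hpair
    obtain ⟨hlL, hLl⟩ := hpair
    have hnζ : ‖ζ‖ ≤ c := by
      have h1 : Tendsto (fun n => (⟪ζ, (L ⟨μm (σ n), (hmem (σ n)).2⟩ : Z)⟫ : ℝ)) atTop
          (nhds (‖ζ‖^2)) := by
        have := hwζ ζ
        rwa [real_inner_self_eq_norm_sq] at this
      have h2 : ∀ n, (⟪ζ, (L ⟨μm (σ n), (hmem (σ n)).2⟩ : Z)⟫ : ℝ)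
          ≤ ‖ζ‖ * Real.sqrt ((δ (σ n))^2 / lam (σ n) + c^2) := by
        intro n
        have hb : ‖(L ⟨μm (σ n), (hmem (σ n)).2⟩ : Z)‖
            ≤ Real.sqrt ((δ (σ n))^2 / lam (σ n) + c^2) := by
          have := Real.sqrt_le_sqrt (hLm (σ n))
          rwa [Real.sqrt_sq (norm_nonneg _)] at this
        calc (⟪ζ, (L ⟨μm (σ n), (hmem (σ n)).2⟩ : Z)⟫ : ℝ)
            ≤ ‖ζ‖ * ‖(L ⟨μm (σ n), (hmem (σ n)).2⟩ : Z)‖ := real_inner_le_norm _ _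
          _ ≤ _ := mul_le_mul_of_nonneg_left hb (norm_nonneg _)
      have h3 : Tendsto (fun n => ‖ζ‖ * Real.sqrt ((δ (σ n))^2 / lam (σ n) + c^2)) atTop
          (nhds (‖ζ‖ * c)) := by
        have hr : Tendsto (fun n => (δ (σ n))^2 / lam (σ n)) atTop (nhds 0) :=
          hrate.comp hσtop
        have h4 : Tendsto (fun n => Real.sqrt ((δ (σ n))^2 / lam (σ n) + c^2)) atTop
            (nhds (Real.sqrt (0 + c^2))) :=
          (Real.continuous_sqrt.tendsto _).comp (hr.add_const _)
        have h5 : Real.sqrt (0 + c^2) = c := by rw [zero_add, Real.sqrt_sq hc0]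
        rw [h5] at h4
        exact h4.const_mul _
      have h6 : ‖ζ‖^2 ≤ ‖ζ‖ * c := le_of_tendsto_of_tendsto' h1 h3 h2
      nlinarith [norm_nonneg ζ]
    have hlmin : ∀ μ, μ ∈ D → ∀ hμ : μ ∈ domL, F μ = v →
        ‖(L ⟨l, hlL⟩ : Z)‖ ≤ ‖(L ⟨μ, hμ⟩ : Z)‖ := by
      intro μ hD hμ hFμ
      rw [hLl]
      exact hnζ.trans (hplusMin μ hD hμ hFμ)
    have hlp : l = μplus := hplusUnique l hlD hlL hlF hlmin
    exact ⟨fun n => φ (ψ n), by rw [← hlp]; exact hwl'⟩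
  intro w
  apply tendsto_of_subseq_tendsto
  intro ns hns
  obtain ⟨ms, hms⟩ := main ns hns
  exact ⟨ms, hms w⟩
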